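/- arXiv:2506.17605 — 4 statements merged into one kernel-verified Lean document; each statement's English description precedes it below -/
import Mathlib

section
/- Let γ ∈ ℤ[i] be nonzero, and let E_{γ²} be the elliptic curve over ℚ(i) given by y² = x³ + γ²x. Then E_{γ²}(ℚ(i)) contains no point of order 3. -/
noncomputable section

open WeierstrassCurve
open scoped IntermediateField

/-- The field `ℚ(i)`, realized as the subfield of `ℂ` generated by `Complex.I` over `ℚ`. -/
abbrev QI : IntermediateField ℚ ℂ := ℚ⟮Complex.I⟯

/-- The imaginary unit `i` as an element of `ℚ(i)`. -/
def QIi : QI := ⟨Complex.I, IntermediateField.mem_adjoin_simple_self ℚ Complex.I⟩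

/-- The imaginary unit `i` as a Gaussian integer, so `ℤ[i] = ℤ + ℤ·gi`. -/
def gi : GaussianInt := ⟨0, 1⟩

/-- The canonical embedding `ℤ[i] → ℚ(i)`, sending `a + b·i` to `a + b·i`. -/
def toQI (z : GaussianInt) : QI := (z.re : QI) + (z.im : QI) * QIi

/-- The (Weierstrass model of the) elliptic curve `Eα : y² = x³ + α x` over `ℚ(i)`. -/
def Ecurve (α : QI) : WeierstrassCurve QI := ⟨0, 0, 0, α, 0⟩

/-- A Gaussian prime congruent to `-1 - 6i` modulo `16`. -/
def GoodPrime (π : GaussianInt) : Prop :=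
  Prime π ∧ (16 : GaussianInt) ∣ (π - (-1 - 6 * gi))

/-- The subfield `ℚ + ℚ·i` of `ℂ`, as an intermediate field of `ℂ/ℚ`. -/
def QIexplicit : IntermediateField ℚ ℂ where
  carrier := {z | ∃ p q : ℚ, z = (p : ℂ) + (q : ℂ) * Complex.I}
  zero_mem' := ⟨0, 0, by simp⟩
  one_mem' := ⟨1, 0, by simp⟩
  add_mem' := by
    rintro a b ⟨p, q, rfl⟩ ⟨r, s, rfl⟩
    exact ⟨p + r, q + s, by push_cast; ring⟩
  mul_mem' := by
    rintro a b ⟨p, q, rfl⟩ ⟨r, s, rfl⟩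
    refine ⟨p * r - q * s, p * s + q * r, ?_⟩
    push_cast
    linear_combination (q * s : ℂ) * Complex.I_sq
  algebraMap_mem' := fun r => ⟨r, 0, by simp⟩
  inv_mem' := by
    rintro a ⟨p, q, rfl⟩
    rcases eq_or_ne ((p : ℂ) + (q : ℂ) * Complex.I) 0 with h0 | h0
    · exact ⟨0, 0, by simp [h0]⟩
    · have hpq : p ≠ 0 ∨ q ≠ 0 := by
        by_contra h
        push_neg at h
        exact h0 (by simp [h.1, h.2])
      have hd : (p ^ 2 + q ^ 2 : ℚ) ≠ 0 := by
        rcases hpq with h | h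
        · positivity
        · positivity
      refine ⟨p / (p ^ 2 + q ^ 2), -q / (p ^ 2 + q ^ 2), ?_⟩
      apply inv_eq_of_mul_eq_one_right
      have hd' : ((p : ℂ) ^ 2 + (q : ℂ) ^ 2) ≠ 0 := by
        intro h
        exact hd (by exact_mod_cast h)
      push_cast
      field_simp
      linear_combination (-(q : ℂ) ^ 2) * Complex.I_sq

lemma mem_QIexplicit {z : ℂ} :
    z ∈ QIexplicit ↔ ∃ p q : ℚ, z = (p : ℂ) + (q : ℂ) * Complex.I :=
  Iff.rfl

lemma QI_le : QI ≤ QIexplicit := by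
  rw [IntermediateField.adjoin_le_iff]
  rintro z rfl
  exact mem_QIexplicit.mpr ⟨0, 1, by simp⟩

lemma rat_sq_ne_three (p : ℚ) : p ^ 2 ≠ 3 := by
  intro h
  have h3 : IsSquare (3 : ℚ) := ⟨p, by rw [← h]; ring⟩
  rw [show (3 : ℚ) = ((3 : ℕ) : ℚ) by norm_num, Rat.isSquare_natCast_iff] at h3
  rcases h3 with ⟨r, hr⟩
  have : r ≤ 2 := by nlinarith
  interval_cases r <;> omega

/-- No element of `ℚ(i)` squares to `3`. -/
lemma no_sqrt3 (t : QI) : t ^ 2 ≠ 3 := by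
  intro ht
  obtain ⟨p, q, hpq⟩ := mem_QIexplicit.mp (QI_le t.2)
  have htc : ((p : ℂ) + (q : ℂ) * Complex.I) ^ 2 = 3 := by
    rw [← hpq, ← SubmonoidClass.coe_pow, ht]
    norm_cast
  have hexp : (((p ^ 2 - q ^ 2 : ℚ)) : ℂ) + ((2 * p * q : ℚ) : ℂ) * Complex.I
      = ((3 : ℚ) : ℂ) := by
    push_cast
    linear_combination htc - (q : ℂ) ^ 2 * Complex.I_sq
  have hre : p ^ 2 - q ^ 2 = 3 := by
    have := congrArg Complex.re hexp
    simp only [Complex.add_re, Complex.mul_re, Complex.ratCast_re, Complex.ratCast_im,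
      Complex.I_re, Complex.I_im, mul_zero, mul_one, sub_zero, add_zero] at this
    exact_mod_cast this
  have him : 2 * p * q = 0 := by
    have h5 := congrArg Complex.im hexp
    simp only [Complex.add_im, Complex.mul_im, Complex.mul_re, Complex.ratCast_im,
      Complex.ratCast_re, Complex.I_im, Complex.I_re, mul_zero, mul_one, zero_add,
      zero_mul, add_zero, zero_sub, sub_zero] at h5
    exact_mod_cast h5
  rcases mul_eq_zero.mp him with h | h
  · rcases mul_eq_zero.mp h with h | h
    · norm_num at h
    · subst h
      nlinarith [sq_nonneg q]
  · subst h
    exact rat_sq_ne_three p (by linarith)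

lemma QIi_sq : QIi ^ 2 = -1 := by
  apply Subtype.ext
  push_cast [QIi]
  exact Complex.I_sq

lemma toQI_mul (z w : GaussianInt) : toQI (z * w) = toQI z * toQI w := by
  simp only [toQI, Zsqrtd.re_mul, Zsqrtd.im_mul]
  push_cast
  linear_combination (-(z.im : QI) * (w.im : QI)) * QIi_sq

lemma toQI_ne_zero {z : GaussianInt} (hz : z ≠ 0) : toQI z ≠ 0 := by
  intro h
  apply hz
  have hc : ((z.re : ℂ) + (z.im : ℂ) * Complex.I) = 0 := by
    have h' := congrArg Subtype.val h
    push_cast [toQI, QIi] at h'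
    exact_mod_cast h'
  have hre : z.re = 0 := by
    have h1 := congrArg Complex.re hc
    simp at h1
    simp only [GaussianInt.toComplex_def₂] at h1
    exact_mod_cast h1
  have him : z.im = 0 := by
    have h1 := congrArg Complex.im hc
    simp at h1
    simp only [GaussianInt.toComplex_def₂] at h1
    exact_mod_cast h1
  exact Zsqrtd.ext_iff.mpr ⟨by simp [hre], by simp [him]⟩

lemma aux (α : QI) (hex : ∃ c : QI, c ≠ 0 ∧ α = c ^ 2)
    (P : (Ecurve α).toAffine.Point) : addOrderOf P ≠ 3 := by
  obtain ⟨c, hcne, rfl⟩ := hex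
  intro h3
  have hP3 : (3 : ℕ) • P = 0 := by
    rw [← h3]; exact addOrderOf_nsmul_eq_zero P
  rcases P with _ | @⟨x, y, h⟩
  · rw [← Affine.Point.zero_def, addOrderOf_zero] at h3
    norm_num at h3
  have ha1 : (Ecurve (c ^ 2)).toAffine.a₁ = 0 := rfl
  have ha2 : (Ecurve (c ^ 2)).toAffine.a₂ = 0 := rfl
  have ha3 : (Ecurve (c ^ 2)).toAffine.a₃ = 0 := rfl
  have ha4 : (Ecurve (c ^ 2)).toAffine.a₄ = c ^ 2 := rfl
  have ha6 : (Ecurve (c ^ 2)).toAffine.a₆ = 0 := rfl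
  have hnegY : (Ecurve (c ^ 2)).toAffine.negY x y = -y := by
    rw [Affine.negY, ha1, ha3]; ring
  have heq : y ^ 2 = x ^ 3 + c ^ 2 * x := by
    have he := h.1
    rw [Affine.equation_iff, ha1, ha2, ha3, ha4, ha6] at he
    linear_combination he
  by_cases hy : y = (Ecurve (c ^ 2)).toAffine.negY x y
  · have h2 : (2 : ℕ) • Affine.Point.some _ _ h = 0 := by
      rw [two_nsmul]; exact Affine.Point.add_self_of_Y_eq hy
    have hdvd := addOrderOf_dvd_of_nsmul_eq_zero h2
    rw [h3] at hdvd
    norm_num at hdvd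
  · have hy0 : y ≠ 0 := by
      intro h0
      exact hy (by rw [hnegY, h0, neg_zero])
    have hadd : Affine.Point.some _ _ h + Affine.Point.some _ _ h
        = Affine.Point.some _ _ (Affine.nonsingular_add h h fun hxy => hy hxy.right) :=
      Affine.Point.add_self_of_Y_ne hy
    have h2P : Affine.Point.some _ _ (Affine.nonsingular_add h h fun hxy => hy hxy.right)
        + Affine.Point.some _ _ h = 0 := by
      rw [← hadd, ← hP3]
      rw [show (3 : ℕ) = 2 + 1 from rfl, add_nsmul, two_nsmul, one_nsmul]
    have hneg : Affine.Point.some _ _ (Affine.nonsingular_add h h fun hxy => hy hxy.right)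
        = -Affine.Point.some _ _ h := add_eq_zero_iff_eq_neg.mp h2P
    rw [Affine.Point.neg_some] at hneg
    have hx : (Ecurve (c ^ 2)).toAffine.addX x x
        ((Ecurve (c ^ 2)).toAffine.slope x x y y) = x := by
      injection hneg with hx hy'
    have hyne2 : (2 : QI) * y ≠ 0 := mul_ne_zero two_ne_zero hy0
    have hslope : (Ecurve (c ^ 2)).toAffine.slope x x y y
        = (3 * x ^ 2 + c ^ 2) / (2 * y) := by
      rw [Affine.slope_of_Y_ne rfl hy, hnegY, ha1, ha2, ha4]
      ring_nf
    rw [Affine.addX, hslope, ha1, ha2] at hx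
    have hx' : ((3 * x ^ 2 + c ^ 2) / (2 * y)) ^ 2 = 3 * x := by
      linear_combination hx
    rw [div_pow, div_eq_iff (pow_ne_zero 2 hyne2)] at hx'
    have hkey : 3 * x ^ 4 + 6 * c ^ 2 * x ^ 2 - c ^ 4 = 0 := by
      linear_combination -hx' - 12 * x * heq
    have hc2 : (2 : QI) * c ^ 2 ≠ 0 := mul_ne_zero two_ne_zero (pow_ne_zero 2 hcne)
    refine no_sqrt3 ((3 * x ^ 2 + 3 * c ^ 2) / (2 * c ^ 2)) ?_
    rw [div_pow, div_eq_iff (pow_ne_zero 2 hc2)]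
    linear_combination 3 * hkey

/-- for nonzero `γ ∈ ℤ[i]`, the group `E_{γ²}(ℚ(i))` has no point of order 3. -/
theorem stmt5 (γ : GaussianInt) (hγ : γ ≠ 0) :
    ∀ P : (Ecurve (toQI (γ ^ 2))).toAffine.Point, addOrderOf P ≠ 3 := by
  intro P
  exact aux (toQI (γ ^ 2)) ⟨toQI γ, toQI_ne_zero hγ, by rw [sq, toQI_mul, ← sq]⟩ P
end
end

section
/- Let γ ∈ ℤ[i] be squarefree (in particular nonzero), and let E_{γ²} be the elliptic curve over ℚ(i) given by y² = x³ + γ²x. Then E_{γ²}(ℚ(i)) contains a point of order 4 if and only if γ² = −1. -/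
noncomputable section

open WeierstrassCurve
open scoped IntermediateField

/-- The subfield of ℂ of elements of the form a + b I, a b rational. -/
def ratI : IntermediateField ℚ ℂ where
  carrier := {z | ∃ a b : ℚ, z = (a : ℂ) + (b : ℂ) * Complex.I}
  zero_mem' := ⟨0, 0, by simp⟩
  one_mem' := ⟨1, 0, by simp⟩
  add_mem' := by
    rintro z w ⟨a, b, rfl⟩ ⟨c, d, rfl⟩
    exact ⟨a + c, b + d, by push_cast; ring⟩
  mul_mem' := by
    rintro z w ⟨a, b, rfl⟩ ⟨c, d, rfl⟩
    refine ⟨a * c - b * d, a * d + b * c, ?_⟩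
    push_cast
    linear_combination ((b : ℂ) * d) * Complex.I_sq
  algebraMap_mem' := fun q => ⟨q, 0, by simp⟩
  inv_mem' := by
    rintro z ⟨a, b, rfl⟩
    by_cases h : (a : ℂ) + (b : ℂ) * Complex.I = 0
    · rw [h, inv_zero]; exact ⟨0, 0, by simp⟩
    · have hab : a ^ 2 + b ^ 2 ≠ 0 := by
        intro hc
        have ha : a = 0 ∧ b = 0 := by
          constructor <;> nlinarith [sq_nonneg a, sq_nonneg b]
        apply h; rw [ha.1, ha.2]; simp
      refine ⟨a / (a ^ 2 + b ^ 2), -b / (a ^ 2 + b ^ 2), ?_⟩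
      apply inv_eq_of_mul_eq_one_right
      have : ((a : ℂ) ^ 2 + (b : ℂ) ^ 2) ≠ 0 := by
        intro hc; apply hab; exact_mod_cast hc
      push_cast
      field_simp
      linear_combination (-(b:ℂ)^2) * Complex.I_sq

lemma QI_le_ratI : QI ≤ ratI :=
  IntermediateField.adjoin_le_iff.mpr (by rintro z rfl; exact ⟨0, 1, by simp⟩)

lemma QI_repr (z : QI) : ∃ a b : ℚ, (z : ℂ) = (a : ℂ) + (b : ℂ) * Complex.I :=
  QI_le_ratI z.2

lemma rat_sq_ne_two (q : ℚ) : q ^ 2 ≠ 2 := by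
  intro h
  apply irrational_sqrt_two
  refine ⟨|q|, ?_⟩
  have hq : ((q : ℝ)) ^ 2 = 2 := by exact_mod_cast h
  rw [← hq, Real.sqrt_sq_eq_abs]
  push_cast
  rw [abs_eq_abs]  -- perhaps
  left; rfl

lemma two_not_square_QI (w : QI) (c : ℚ) (hc : c = 2 ∨ c = -2) (h : w ^ 2 = (c : QI)) :
    False := by
  obtain ⟨a, b, hab⟩ := QI_repr w
  have hC : ((w : ℂ)) ^ 2 = (c : ℂ) := by exact_mod_cast congrArg (Subtype.val) h
  rw [hab] at hC
  have hre : a * a - b * b = c := by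
    have := congrArg Complex.re hC
    simp [Complex.add_re, Complex.mul_re, Complex.add_im, Complex.mul_im, pow_two] at this
    exact_mod_cast this
  have him : a * b = 0 := by
    have := congrArg Complex.im hC
    simp [Complex.add_re, Complex.mul_re, Complex.add_im, Complex.mul_im, pow_two] at this
    have h2 : (a : ℝ) * b + b * a = 0 := by exact_mod_cast this
    have : (a : ℝ) * b = 0 := by linarith
    exact_mod_cast this
  rcases mul_eq_zero.mp him with rfl | rfl
  · rcases hc with rfl | rfl
    · nlinarith [sq_nonneg b]
    · exact rat_sq_ne_two b (by nlinarith)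
  · rcases hc with rfl | rfl
    · exact rat_sq_ne_two a (by nlinarith)
    · nlinarith [sq_nonneg a]

set_option synthInstance.maxHeartbeats 1000000 in
open GaussianInt in
lemma prime_onePlusI : Prime (⟨1, 1⟩ : GaussianInt) := by
  rw [← irreducible_iff_prime]
  constructor
  · intro h
    have := Zsqrtd.norm_eq_one_iff.mpr h
    simp [Zsqrtd.norm] at this
  · intro a b hab
    have hn : (Zsqrtd.norm a).natAbs * (Zsqrtd.norm b).natAbs = 2 := by
      rw [← Int.natAbs_mul, ← Zsqrtd.norm_mul, ← hab]
      simp [Zsqrtd.norm]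
    rcases (Nat.prime_two.eq_one_or_self_of_dvd (Zsqrtd.norm a).natAbs ⟨_, hn.symm⟩) with h1 | h2
    · exact Or.inl (Zsqrtd.norm_eq_one_iff.mp h1)
    · right
      apply Zsqrtd.norm_eq_one_iff.mp
      have hb2 : (2 : ℕ) * (Zsqrtd.norm b).natAbs = 2 * 1 := by rw [← h2]; omega
      exact Nat.eq_of_mul_eq_mul_left (by norm_num) hb2

lemma gaussian_unit_cases (u : GaussianInt) (h : IsUnit u) :
    u = 1 ∨ u = -1 ∨ u = ⟨0, 1⟩ ∨ u = -⟨0, 1⟩ := by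
  have h1 : Zsqrtd.norm u = 1 := (Zsqrtd.norm_eq_one_iff' (by norm_num) u).mpr h
  obtain ⟨r, i⟩ := u
  have hsum : r * r + i * i = 1 := by
    have h2 : r * r - (-1) * i * i = 1 := by simpa [Zsqrtd.norm] using h1
    linarith
  have hre : r = 0 ∨ r = 1 ∨ r = -1 := by
    have h4 : -1 ≤ r ∧ r ≤ 1 := by constructor <;> nlinarith
    omega
  have him : i = 0 ∨ i = 1 ∨ i = -1 := by
    have h4 : -1 ≤ i ∧ i ≤ 1 := by constructor <;> nlinarith
    omega
  have hone : (1 : GaussianInt) = ⟨1, 0⟩ := rfl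
  have hmone : (-1 : GaussianInt) = ⟨-1, 0⟩ := rfl
  have hmi : (-⟨0, 1⟩ : GaussianInt) = ⟨0, -1⟩ := rfl
  rw [hmone, hmi, hone]
  simp only [Zsqrtd.ext_iff]
  rcases hre with h | h | h <;> rcases him with h' | h' | h' <;> subst h <;> subst h' <;>
    revert hsum <;> norm_num

lemma gaussian_descent (γ : GaussianInt) (hγ : Squarefree γ) :
    ∀ N : ℕ, ∀ n : GaussianInt, (Zsqrtd.norm n).natAbs ≤ N → n ≠ 0 →
      ∀ u ν : GaussianInt, IsUnit u → ν ^ 2 = u * n ^ 2 * γ → IsUnit γ := by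
  intro N
  induction N with
  | zero =>
    intro n hn hn0 u ν hu hloc
    exact absurd ((Zsqrtd.norm_eq_zero_iff (by norm_num) n).mp
      (Int.natAbs_eq_zero.mp (by omega))) hn0
  | succ N ih =>
    intro n hn hn0 u ν hu heq
    by_contra hne
    have hγ0 : γ ≠ 0 := hγ.ne_zero
    -- γ ∣ ν
    have hdvd1 : γ ∣ ν := (hγ.dvd_pow_iff_dvd two_ne_zero).mp ⟨u * n ^ 2, by linear_combination heq⟩
    obtain ⟨τ, rfl⟩ := hdvd1
    have heq2 : γ * τ ^ 2 = u * n ^ 2 := by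
      have : γ * (γ * τ ^ 2) = γ * (u * n ^ 2) := by ring_nf; ring_nf at heq; linear_combination heq
      exact mul_left_cancel₀ hγ0 this
    obtain ⟨v, hv⟩ := hu.exists_right_inv
    have hdvd2 : γ ∣ n := by
      apply (hγ.dvd_pow_iff_dvd two_ne_zero).mp
      exact ⟨v * τ ^ 2, by linear_combination (-v) * heq2 + (-(n^2)) * hv⟩
    obtain ⟨σ, rfl⟩ := hdvd2
    have hσ0 : σ ≠ 0 := by rintro rfl; simp at hn0
    have heq3 : τ ^ 2 = u * σ ^ 2 * γ := by
      have : γ * τ ^ 2 = γ * (u * σ ^ 2 * γ) := by linear_combination heq2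
      exact mul_left_cancel₀ hγ0 this
    -- norm decreases
    have hnγ : 2 ≤ (Zsqrtd.norm γ).natAbs := by
      rcases Nat.lt_or_ge (Zsqrtd.norm γ).natAbs 2 with h | h
      · interval_cases h' : (Zsqrtd.norm γ).natAbs
        · exact absurd ((Zsqrtd.norm_eq_zero_iff (by norm_num) γ).mp (by omega)) hγ0
        · exact absurd (Zsqrtd.norm_eq_one_iff.mp h') hne
      · exact h
    have hnσ : 1 ≤ (Zsqrtd.norm σ).natAbs := by
      rcases Nat.eq_zero_or_pos (Zsqrtd.norm σ).natAbs with h | h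
      · exact absurd ((Zsqrtd.norm_eq_zero_iff (by norm_num) σ).mp (by omega)) hσ0
      · exact h
    have hprod : (Zsqrtd.norm (γ * σ)).natAbs = (Zsqrtd.norm γ).natAbs * (Zsqrtd.norm σ).natAbs := by
      rw [Zsqrtd.norm_mul, Int.natAbs_mul]
    have hlt : (Zsqrtd.norm σ).natAbs ≤ N := by
      have := hn
      rw [hprod] at this
      nlinarith
    exact absurd (ih σ hlt hσ0 u τ hu heq3) hne


lemma toQI_coe (z : GaussianInt) : ((toQI z : QI) : ℂ) = GaussianInt.toComplex z := by
  rw [GaussianInt.toComplex_def, toQI]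
  push_cast
  rfl

lemma QI_coe_injective : Function.Injective (fun z : QI => (z : ℂ)) :=
  fun _ _ h => Subtype.ext h

lemma toQI_sq (z : GaussianInt) : toQI (z ^ 2) = (toQI z) ^ 2 := by
  apply QI_coe_injective
  show ((toQI (z^2) : QI) : ℂ) = ((toQI z ^ 2 : QI) : ℂ)
  rw [toQI_coe]
  push_cast
  rw [toQI_coe, map_pow]

lemma toQI_eq_zero {z : GaussianInt} : toQI z = 0 ↔ z = 0 := by
  constructor
  · intro h
    have : ((toQI z : QI) : ℂ) = 0 := by rw [h]; rfl
    rw [toQI_coe] at this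
    exact GaussianInt.toComplex_eq_zero.mp this
  · rintro rfl
    apply QI_coe_injective
    show ((toQI 0 : QI) : ℂ) = ((0 : QI) : ℂ)
    rw [toQI_coe]; simp

lemma toQI_one : toQI 1 = 1 := by
  apply QI_coe_injective
  show ((toQI 1 : QI) : ℂ) = ((1 : QI) : ℂ)
  rw [toQI_coe]; simp

lemma toQI_neg_one : toQI (-1) = -1 := by
  apply QI_coe_injective
  show ((toQI (-1) : QI) : ℂ) = ((-1 : QI) : ℂ)
  rw [toQI_coe]; simp

lemma key_NT_rest (γ : GaussianInt) (hγ : Squarefree γ) (w : QI)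
    (h : w ^ 2 = 2 * toQI γ ∨ w ^ 2 = -(2 * toQI γ))
    (m : ℤ) (hmQ : (m : ℚ) ≠ 0) (μ : GaussianInt)
    (key : μ ^ 2 = 2 * (m : GaussianInt) ^ 2 * γ ∨ μ ^ 2 = -(2 * (m : GaussianInt) ^ 2 * γ)) :
    γ ^ 2 = -1 := by
  have hm0 : m ≠ 0 := by exact_mod_cast hmQ
  have hn0' : (m : GaussianInt) ≠ 0 := fun hc => hm0 (by exact_mod_cast hc)
  set n : GaussianInt := (m : GaussianInt) with hn
  have hn0 : n ≠ 0 := hn0'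
  have h22 : (2 : GaussianInt) = ⟨1,1⟩ ^ 2 * ⟨0,-1⟩ := by
    norm_num [Zsqrtd.ext_iff, Zsqrtd.re_mul, Zsqrtd.im_mul, pow_two]
  have hδ0 : (⟨1,1⟩ : GaussianInt) ≠ 0 := prime_onePlusI.ne_zero
  -- δ ∣ μ
  have hδμ : (⟨1,1⟩ : GaussianInt) ∣ μ := by
    apply prime_onePlusI.dvd_of_dvd_pow (n := 2)
    rcases key with k | k
    · exact ⟨⟨1,-1⟩ * n ^ 2 * γ, by rw [k]; rw [show (2:GaussianInt) = ⟨1,1⟩ * ⟨1,-1⟩ by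
        norm_num [Zsqrtd.ext_iff, Zsqrtd.re_mul, Zsqrtd.im_mul]]; ring⟩
    · exact ⟨-(⟨1,-1⟩ * n ^ 2 * γ), by rw [k]; rw [show (2:GaussianInt) = ⟨1,1⟩ * ⟨1,-1⟩ by
        norm_num [Zsqrtd.ext_iff, Zsqrtd.re_mul, Zsqrtd.im_mul]]; ring⟩
  obtain ⟨ν, rfl⟩ := hδμ
  have hsq0 : ((⟨1,1⟩ : GaussianInt)) ^ 2 ≠ 0 := pow_ne_zero _ hδ0
  have hu1 : IsUnit ((⟨0,-1⟩ : GaussianInt)) := by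
    apply IsUnit.of_mul_eq_one (⟨0,1⟩ : GaussianInt)
    norm_num [Zsqrtd.ext_iff, Zsqrtd.re_mul, Zsqrtd.im_mul]
  have hu2 : IsUnit (-(⟨0,-1⟩ : GaussianInt)) := hu1.neg
  have hunit : IsUnit γ := by
    rcases key with k | k
    · apply gaussian_descent γ hγ (Zsqrtd.norm n).natAbs n le_rfl hn0 ⟨0,-1⟩ ν hu1
      have : (⟨1,1⟩:GaussianInt) ^ 2 * ν ^ 2 = (⟨1,1⟩:GaussianInt) ^ 2 * (⟨0,-1⟩ * n ^ 2 * γ) := by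
        rw [h22] at k; linear_combination k
      exact mul_left_cancel₀ hsq0 this
    · apply gaussian_descent γ hγ (Zsqrtd.norm n).natAbs n le_rfl hn0 (-⟨0,-1⟩) ν hu2
      have : (⟨1,1⟩:GaussianInt) ^ 2 * ν ^ 2 = (⟨1,1⟩:GaussianInt) ^ 2 * (-⟨0,-1⟩ * n ^ 2 * γ) := by
        rw [h22] at k; linear_combination k
      exact mul_left_cancel₀ hsq0 this
  rcases gaussian_unit_cases γ hunit with rfl | rfl | rfl | rfl
  · exfalso
    rcases h with h | h
    · exact two_not_square_QI w 2 (Or.inl rfl) (by rw [h, toQI_one, mul_one]; norm_cast)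
    · exact two_not_square_QI w (-2) (Or.inr rfl) (by rw [h, toQI_one]; push_cast; ring)
  · exfalso
    rcases h with h | h
    · exact two_not_square_QI w (-2) (Or.inr rfl) (by rw [h, toQI_neg_one]; push_cast; ring)
    · exact two_not_square_QI w 2 (Or.inl rfl) (by rw [h, toQI_neg_one]; push_cast; ring)
  · norm_num [Zsqrtd.ext_iff, Zsqrtd.re_mul, Zsqrtd.im_mul, pow_two]
  · norm_num [Zsqrtd.ext_iff, Zsqrtd.re_mul, Zsqrtd.im_mul, pow_two]

lemma key_NT (γ : GaussianInt) (hγ : Squarefree γ) (w : QI)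
    (h : w ^ 2 = 2 * toQI γ ∨ w ^ 2 = -(2 * toQI γ)) : γ ^ 2 = -1 := by
  obtain ⟨a, b, hab⟩ := QI_repr w
  set m : ℤ := (a.den : ℤ) * b.den with hm
  have hmQ : (m : ℚ) ≠ 0 := by
    rw [hm]
    push_cast
    positivity
  have ha' : a * (a.den : ℚ) = a.num := by
    exact_mod_cast Rat.mul_den_eq_num a
  have hb' : b * (b.den : ℚ) = b.num := by
    exact_mod_cast Rat.mul_den_eq_num b
  set μ : GaussianInt := ⟨a.num * b.den, b.num * a.den⟩ with hμdef
  have hμ : (GaussianInt.toComplex μ) = (m : ℂ) * (w : ℂ) := by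
    rw [GaussianInt.toComplex_def, hab, hμdef]
    have h1 : ((a.num * b.den : ℤ) : ℚ) = m * a := by push_cast; rw [hm]; push_cast; nlinarith [ha']
    have h2 : ((b.num * a.den : ℤ) : ℚ) = m * b := by push_cast; rw [hm]; push_cast; nlinarith [hb']
    have h1c : ((a.num * b.den : ℤ) : ℂ) = (m : ℂ) * (a : ℂ) := by exact_mod_cast congrArg (fun q : ℚ => (q : ℂ)) h1
    have h2c : ((b.num * a.den : ℤ) : ℂ) = (m : ℂ) * (b : ℂ) := by exact_mod_cast congrArg (fun q : ℚ => (q : ℂ)) h2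
    push_cast at h1c h2c ⊢
    rw [h1c, h2c]
    ring
  -- the equation in ℤ[i]
  have key : μ ^ 2 = 2 * (m : GaussianInt) ^ 2 * γ ∨ μ ^ 2 = -(2 * (m : GaussianInt) ^ 2 * γ) := by
    have hw2 : ((w ^ 2 : QI) : ℂ) = (w : ℂ) ^ 2 := by push_cast; rfl
    rcases h with h | h
    · left
      apply GaussianInt.toComplex_inj.mp
      rw [map_pow, hμ, map_mul, map_mul, map_pow]
      have : ((w ^ 2 : QI) : ℂ) = ((2 * toQI γ : QI) : ℂ) := by rw [h]
      rw [hw2] at this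
      push_cast at this
      rw [toQI_coe, show (((2 : QI) : ℂ)) = 2 from rfl] at this
      rw [mul_pow, this]
      simp only [map_intCast, map_ofNat]
      ring
    · right
      apply GaussianInt.toComplex_inj.mp
      rw [map_pow, hμ, map_neg, map_mul, map_mul, map_pow]
      have : ((w ^ 2 : QI) : ℂ) = ((-(2 * toQI γ) : QI) : ℂ) := by rw [h]
      rw [hw2] at this
      push_cast at this
      rw [toQI_coe, show (((2 : QI) : ℂ)) = 2 from rfl] at this
      rw [mul_pow, this]
      simp only [map_intCast, map_ofNat]
      ring
  exact key_NT_rest γ hγ w h m hmQ μ key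

lemma Ecurve_a₁ (α : QI) : (Ecurve α).toAffine.a₁ = 0 := rfl
lemma Ecurve_a₂ (α : QI) : (Ecurve α).toAffine.a₂ = 0 := rfl
lemma Ecurve_a₃ (α : QI) : (Ecurve α).toAffine.a₃ = 0 := rfl
lemma Ecurve_a₄ (α : QI) : (Ecurve α).toAffine.a₄ = α := rfl
lemma Ecurve_a₆ (α : QI) : (Ecurve α).toAffine.a₆ = 0 := rfl

lemma Ecurve_negY (α : QI) (x y : QI) : (Ecurve α).toAffine.negY x y = -y := by
  simp [Affine.negY, Ecurve_a₁, Ecurve_a₃]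

lemma Ecurve_equation {α x y : QI} (h : (Ecurve α).toAffine.Equation x y) :
    y ^ 2 = x ^ 3 + α * x := by
  have := (Affine.equation_iff x y).mp h
  rw [Ecurve_a₁, Ecurve_a₂, Ecurve_a₃, Ecurve_a₄, Ecurve_a₆] at this
  linear_combination this

lemma order_four_iff {α : QI} (P : (Ecurve α).toAffine.Point) :
    addOrderOf P = 4 ↔ 4 • P = 0 ∧ 2 • P ≠ 0 := by
  constructor
  · intro h
    refine ⟨?_, ?_⟩
    · rw [← h]; exact addOrderOf_nsmul_eq_zero P
    · intro hc
      have := addOrderOf_dvd_iff_nsmul_eq_zero.mpr hc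
      rw [h] at this
      norm_num at this
  · rintro ⟨h4, h2⟩
    have hdvd : addOrderOf P ∣ 4 := addOrderOf_dvd_iff_nsmul_eq_zero.mpr h4
    have hnd : ¬ addOrderOf P ∣ 2 := fun hd => h2 (addOrderOf_dvd_iff_nsmul_eq_zero.mp hd)
    have hle : addOrderOf P ≤ 4 := Nat.le_of_dvd (by norm_num) hdvd
    interval_cases h : addOrderOf P <;> revert hdvd hnd <;> decide

lemma forward (γ : GaussianInt) (hγ : Squarefree γ)
    (P : (Ecurve (toQI (γ ^ 2))).toAffine.Point) (hP : addOrderOf P = 4) : γ ^ 2 = -1 := by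
  obtain ⟨h4, h2⟩ := (order_four_iff P).mp hP
  obtain _ | @⟨x, y, h⟩ := P
  · rw [Affine.Point.zero_def] at h2
    exact absurd (smul_zero 2) h2
  generalize hA' : toQI (γ ^ 2) = A at h h2 h4
  have hA : A = toQI (γ ^ 2) := hA'.symm
  have hy : y ≠ (Ecurve A).toAffine.negY x y := by
    intro hc
    exact h2 (by rw [two_nsmul]; exact Affine.Point.add_self_of_Y_eq hc)
  have hy0 : y ≠ 0 := by
    intro hc
    apply hy
    rw [hc, Ecurve_negY, neg_zero]
  set ℓ : QI := (Ecurve A).toAffine.slope x x y y with hℓ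
  have hPP : Affine.Point.some _ _ h + Affine.Point.some _ _ h
      = Affine.Point.some _ _ ((Ecurve A).toAffine.nonsingular_add h h fun hxy => hy hxy.right) :=
    Affine.Point.add_self_of_Y_ne hy
  set X2 : QI := (Ecurve A).toAffine.addX x x ℓ with hX2
  set Y2 : QI := (Ecurve A).toAffine.addY x x y ℓ with hY2
  have hY2zero : Y2 = 0 := by
    by_contra hne
    have hne' : Y2 ≠ (Ecurve A).toAffine.negY X2 Y2 := by
      rw [Ecurve_negY]
      intro hc
      apply hne
      have h20 : (2 : QI) * Y2 = 0 := by linear_combination hc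
      rcases mul_eq_zero.mp h20 with h0 | h0
      · exact absurd h0 two_ne_zero
      · exact h0
    have hadd := Affine.Point.add_of_Y_ne
      (h₁ := (Ecurve A).toAffine.nonsingular_add h h fun hxy => hy hxy.right)
      (h₂ := (Ecurve A).toAffine.nonsingular_add h h fun hxy => hy hxy.right) hne'
    rw [show (4 : ℕ) = 2 + 2 by rfl, add_nsmul, two_nsmul, hPP, hadd] at h4
    exact Affine.Point.some_ne_zero _ h4
  have hden : y - (Ecurve A).toAffine.negY x y ≠ 0 := sub_ne_zero.mpr hy
  rw [Ecurve_negY] at hden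
  have hsl : ℓ * (2 * y) = 3 * x ^ 2 + A := by
    rw [hℓ, Affine.slope_of_Y_ne rfl hy, Ecurve_a₁, Ecurve_a₂, Ecurve_a₄, Ecurve_negY,
      div_mul_eq_mul_div, div_eq_iff hden]
    ring
  have haddX : X2 = ℓ ^ 2 - 2 * x := by
    rw [hX2, Affine.addX, Ecurve_a₁, Ecurve_a₂]
    ring
  have hcube : ℓ * (X2 - x) + y = 0 := by
    have hYv : Y2 = -(ℓ * (X2 - x) + y) := by
      rw [hY2, Affine.addY, Ecurve_negY, Affine.negAddY, ← hX2]
    rw [hY2zero] at hYv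
    linear_combination hYv
  have heq : y ^ 2 = x ^ 3 + A * x := Ecurve_equation h.left
  have hy3 : y = 3 * x * ℓ - ℓ ^ 3 := by
    rw [haddX] at hcube
    linear_combination hcube
  rw [hy3] at hsl heq
  have hfact : (ℓ ^ 2 - 2 * x) * ((ℓ ^ 2 - x) ^ 2 - 2 * x ^ 2) = 0 := by
    linear_combination heq - x * hsl
  rcases mul_eq_zero.mp hfact with hc | hc
  · -- 2P = (0,0); x² = A
    have hc' : ℓ ^ 2 = 2 * x := by linear_combination hc
    have hxx : x ^ 2 = A := by linear_combination hsl + 2 * (ℓ ^ 2 - x) * hc'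
    have hyy : (3 * x * ℓ - ℓ ^ 3) ^ 2 = 2 * x ^ 3 := by linear_combination heq - x * hxx
    have hAg : A = (toQI γ) ^ 2 := by rw [hA, toQI_sq]
    have hg0 : toQI γ ≠ 0 := fun hc0 => hγ.ne_zero (toQI_eq_zero.mp hc0)
    have hxg : (x - toQI γ) * (x + toQI γ) = 0 := by
      rw [hAg] at hxx
      linear_combination hxx
    set g : QI := toQI γ with hg
    rcases mul_eq_zero.mp hxg with h0 | h0
    · have hxg' : x = g := by linear_combination h0
      apply key_NT γ hγ ((3 * x * ℓ - ℓ ^ 3) / g)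
      left
      rw [div_pow, hyy, hxg']
      field_simp
      ring
    · have hxg' : x = -g := by linear_combination h0
      apply key_NT γ hγ ((3 * x * ℓ - ℓ ^ 3) / g)
      right
      rw [div_pow, hyy, hxg']
      field_simp
      ring
  · -- impossible: sqrt 2 rational
    have hx0 : x ≠ 0 := by
      intro hc0
      rw [hc0] at hc
      have hl0 : ℓ = 0 := by
        have hll : (ℓ ^ 2) ^ 2 = 0 := by linear_combination hc
        exact pow_eq_zero_iff (n := 2) (by norm_num) |>.mp
          (pow_eq_zero_iff (n := 2) (by norm_num) |>.mp hll)
      rw [hy3, hc0, hl0] at hy0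
      apply hy0
      ring
    exfalso
    apply (two_not_square_QI ((ℓ ^ 2 - x) / x) 2 (Or.inl rfl))
    have h2c : ((2 : ℚ) : QI) = 2 := by norm_cast
    rw [h2c]
    field_simp
    linear_combination hc

lemma one_sub_QIi_ne : (1 - QIi : QI) ≠ 0 := by
  intro hc
  have hcc : ((1 - QIi : QI) : ℂ) = 0 := by rw [hc]; rfl
  have h1 : (1 : ℂ) - Complex.I = 0 := by push_cast at hcc; exact hcc
  have := congrArg Complex.re h1
  norm_num [Complex.ext_iff] at this

lemma backward : ∃ P : (Ecurve (-1 : QI)).toAffine.Point, addOrderOf P = 4 := by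
  have hi := QIi_sq
  have hEq : (Ecurve (-1 : QI)).toAffine.Equation QIi (1 - QIi) := by
    rw [Affine.equation_iff, Ecurve_a₁, Ecurve_a₂, Ecurve_a₃, Ecurve_a₄, Ecurve_a₆]
    linear_combination (1 - QIi) * hi
  have h2ne : ((1 - QIi : QI)) ≠ -(1 - QIi) := by
    intro hc
    have h20 : (2 : QI) * (1 - QIi) = 0 := by linear_combination hc
    rcases mul_eq_zero.mp h20 with h0 | h0
    · exact two_ne_zero h0
    · exact one_sub_QIi_ne h0
  have hNs : (Ecurve (-1 : QI)).toAffine.Nonsingular QIi (1 - QIi) := by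
    rw [Affine.nonsingular_iff]
    refine ⟨hEq, Or.inr ?_⟩
    rw [Ecurve_a₁, Ecurve_a₃]
    intro hc
    exact h2ne (by linear_combination hc)
  have hy' : (1 - QIi : QI) ≠ (Ecurve (-1 : QI)).toAffine.negY QIi (1 - QIi) := by
    rw [Ecurve_negY]
    exact h2ne
  have hden : (1 - QIi : QI) - (Ecurve (-1 : QI)).toAffine.negY QIi (1 - QIi) ≠ 0 :=
    sub_ne_zero.mpr hy'
  rw [Ecurve_negY] at hden
  have hℓ : (Ecurve (-1 : QI)).toAffine.slope QIi QIi (1 - QIi) (1 - QIi) = -(1 + QIi) := by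
    rw [Affine.slope_of_Y_ne rfl hy', Ecurve_a₁, Ecurve_a₂, Ecurve_a₄, Ecurve_negY,
      div_eq_iff hden]
    linear_combination hi
  have hX2 : (Ecurve (-1 : QI)).toAffine.addX QIi QIi
      ((Ecurve (-1 : QI)).toAffine.slope QIi QIi (1 - QIi) (1 - QIi)) = 0 := by
    rw [hℓ, Affine.addX, Ecurve_a₁, Ecurve_a₂]
    linear_combination hi
  have hY2 : (Ecurve (-1 : QI)).toAffine.addY QIi QIi (1 - QIi)
      ((Ecurve (-1 : QI)).toAffine.slope QIi QIi (1 - QIi) (1 - QIi)) = 0 := by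
    rw [Affine.addY, Affine.negAddY, Ecurve_negY, hX2, hℓ]
    linear_combination -hi
  have hQQ : Affine.Point.some _ _ hNs + Affine.Point.some _ _ hNs
      = Affine.Point.some _ _ ((Ecurve (-1 : QI)).toAffine.nonsingular_add hNs hNs fun hxy => hy' hxy.right) :=
    Affine.Point.add_self_of_Y_ne hy'
  refine ⟨Affine.Point.some _ _ hNs, (order_four_iff _).mpr ⟨?_, ?_⟩⟩
  · rw [show (4 : ℕ) = 2 + 2 by rfl, add_nsmul, two_nsmul, hQQ]
    apply Affine.Point.add_self_of_Y_eq
    rw [Ecurve_negY, hY2, neg_zero]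
  · rw [two_nsmul, hQQ]
    exact Affine.Point.some_ne_zero _

/-- for squarefree `γ ∈ ℤ[i]`, the group `E_{γ²}(ℚ(i))` contains a point of
order 4 if and only if `γ² = -1`. -/
theorem stmt6 (γ : GaussianInt) (hγ : Squarefree γ) :
    (∃ P : (Ecurve (toQI (γ ^ 2))).toAffine.Point, addOrderOf P = 4) ↔ γ ^ 2 = -1 := by
  constructor
  · rintro ⟨P, hP⟩
    exact forward γ hγ P hP
  · intro h
    rw [show toQI (γ ^ 2) = -1 from by rw [h, toQI_neg_one]]
    exact backward
end
end

section
/- Let 𝔭 ∈ ℤ[i] be a prime element congruent to −1−6i modulo 16. Then the image of 1+i in the quotient ring ℤ[i]/(𝔭) is a square, and the image of i in ℤ[i]/(𝔭) is not a square. -/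
noncomputable section

lemma gcd_natAbs_right' (x y : ℤ) : Int.gcd x (y.natAbs : ℤ) = Int.gcd x y := by
  rw [Int.gcd_def, Int.gcd_def, Int.natAbs_natCast]

lemma jacobi_aux {p n : ℕ} {x : ℤ} (hp4 : p % 4 = 1) (hn : Odd n)
    (hdvd : (n : ℤ) ∣ ((p : ℤ) - x)) : jacobiSym (n : ℤ) p = jacobiSym x n := by
  rw [jacobiSym.quadratic_reciprocity_one_mod_four' hn hp4]
  exact jacobiSym.mod_left' (Int.ModEq.symm (Int.modEq_iff_dvd.mpr hdvd))


set_option maxHeartbeats 1600000 in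
set_option synthInstance.maxHeartbeats 200000 in
/-- if `π` is a Gaussian prime congruent to `-1-6i (mod 16)`, then `1+i` is a
square in `ℤ[i]/(π)` while `i` is not a square in `ℤ[i]/(π)`. -/
theorem stmt8 (π : GaussianInt) (hπ : Prime π)
    (hcong : (16 : GaussianInt) ∣ (π - (-1 - 6 * gi))) :
    IsSquare (Ideal.Quotient.mk (Ideal.span {π}) (1 + gi)) ∧
    ¬ IsSquare (Ideal.Quotient.mk (Ideal.span {π}) gi) := by
  -- coordinates
  have hdvd : ((16:ℤ) : GaussianInt) ∣ (π - (-1 - 6 * gi)) := by exact_mod_cast hcong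
  have h2 := (Zsqrtd.intCast_dvd 16 (π - (-1 - 6 * gi))).mp hdvd
  have hre : (π - (-1 - 6 * gi)).re = π.re + 1 := by
    simp [gi, Zsqrtd.re_sub, Zsqrtd.im_sub, Zsqrtd.re_mul, Zsqrtd.im_mul]
  have him : (π - (-1 - 6 * gi)).im = π.im + 6 := by
    simp [gi, Zsqrtd.re_sub, Zsqrtd.im_sub, Zsqrtd.re_mul, Zsqrtd.im_mul]
  rw [hre, him] at h2
  set a := π.re with ha
  set b := π.im with hb
  have amod : a % 16 = 15 := by omega
  have bmod : b % 16 = 10 := by omega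
  -- the norm p
  set p : ℕ := (a ^ 2 + b ^ 2).toNat with hpdef
  have hpZ : (p : ℤ) = a ^ 2 + b ^ 2 := by
    have h0 : (0:ℤ) ≤ a ^ 2 + b ^ 2 := by positivity
    simp [hpdef, Int.toNat_of_nonneg h0]
  have hp8 : p % 8 = 5 := by
    obtain ⟨k, hk⟩ : ∃ k, a = 16 * k + 15 := ⟨a / 16, by omega⟩
    obtain ⟨m, hm⟩ : ∃ m, b = 16 * m + 10 := ⟨b / 16, by omega⟩
    have : (p : ℤ) = 8 * (32*k^2 + 60*k + 32*m^2 + 40*m + 40) + 5 := by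
      rw [hpZ, hk, hm]; ring
    omega
  have hp1 : 1 < p := by omega
  have hp4 : p % 4 = 1 := by omega
  have hoddp : Odd p := by rw [Nat.odd_iff]; omega
  have hnorm : Zsqrtd.norm π = a ^ 2 + b ^ 2 := by rw [Zsqrtd.norm_def]; ring
  -- quotient field
  haveI hmax : (Ideal.span {π}).IsMaximal :=
    PrincipalIdealRing.isMaximal_of_irreducible hπ.irreducible
  set mk := Ideal.Quotient.mk (Ideal.span {π}) with hmkdef
  have hmkpi : mk π = 0 := Ideal.Quotient.eq_zero_iff_mem.mpr (Ideal.subset_span rfl)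
  have hpF : ((p : ℕ) : GaussianInt ⧸ Ideal.span {π}) = 0 := by
    have h1 : ((p:ℤ) : GaussianInt) = π * star π := by
      rw [hpZ, ← hnorm]; exact Zsqrtd.norm_eq_mul_conj π
    have h2 : ((p:ℤ) : GaussianInt ⧸ Ideal.span {π}) = 0 := by
      rw [← map_intCast mk, h1, map_mul, hmkpi, zero_mul]
    exact_mod_cast h2
  -- characteristic and primality of p
  set q := ringChar (GaussianInt ⧸ Ideal.span {π}) with hqdef
  haveI hqP : CharP (GaussianInt ⧸ Ideal.span {π}) q := ringChar.charP _
  have hq_prime : q.Prime := by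
    rcases CharP.char_is_prime_or_zero (GaussianInt ⧸ Ideal.span {π}) q with h | h
    · exact h
    · exfalso
      rw [h] at hqP
      haveI : CharZero (GaussianInt ⧸ Ideal.span {π}) := CharP.charP_to_charZero _
      have := Nat.cast_eq_zero.mp hpF
      omega
  have hqp : q ∣ p := (CharP.cast_eq_zero_iff _ q p).mp hpF
  have hπq : π ∣ ((q : ℕ) : GaussianInt) := by
    rw [← Ideal.mem_span_singleton]
    apply Ideal.Quotient.eq_zero_iff_mem.mp
    show mk ((q:ℕ) : GaussianInt) = 0
    rw [map_natCast mk]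
    exact CharP.cast_eq_zero _ q
  obtain ⟨c, hc⟩ := hπq
  have hnormc : (a ^ 2 + b ^ 2) * Zsqrtd.norm c = (q : ℤ) ^ 2 := by
    have h3 := congrArg Zsqrtd.norm hc
    rw [Zsqrtd.norm_mul, hnorm, Zsqrtd.norm_natCast] at h3
    rw [← h3]; ring
  have hpprime : p.Prime := by
    have hpq2 : p ∣ q ^ 2 := by
      have h4 : (p : ℤ) ∣ (q : ℤ) ^ 2 := ⟨Zsqrtd.norm c, by rw [← hnormc, hpZ]⟩
      exact_mod_cast h4
    rcases (Nat.dvd_prime_pow hq_prime).mp hpq2 with ⟨k, hk2, hkp⟩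
    interval_cases k
    · simp at hkp; omega
    · rw [pow_one] at hkp; rw [hkp]; exact hq_prime
    · exfalso
      have hq2p : (q : ℤ) ^ 2 = (p : ℤ) := by rw [hkp]; push_cast; ring
      have hnc1 : Zsqrtd.norm c = 1 := by
        have hpe : (p:ℤ) * Zsqrtd.norm c = (p:ℤ) * 1 := by
          calc (p:ℤ) * Zsqrtd.norm c = (a ^ 2 + b ^ 2) * Zsqrtd.norm c := by rw [hpZ]
          _ = (q:ℤ)^2 := hnormc
          _ = (p:ℤ) := hq2p
          _ = (p:ℤ) * 1 := (mul_one _).symm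
        exact mul_left_cancel₀ (Int.natCast_ne_zero.mpr (by omega)) hpe
      have hc1 : c.re ^ 2 + c.im ^ 2 = 1 := by
        rw [Zsqrtd.norm_def] at hnc1; linear_combination hnc1
      have hre0 : (q:ℤ) = a * c.re - b * c.im := by
        have h5 := congrArg Zsqrtd.re hc
        simpa [Zsqrtd.re_mul, Zsqrtd.re_natCast, Zsqrtd.im_natCast, ha, hb, sub_eq_add_neg] using h5
      have him0 : 0 = a * c.im + b * c.re := by
        have h6 := congrArg Zsqrtd.im hc
        simpa [Zsqrtd.im_mul, Zsqrtd.re_natCast, Zsqrtd.im_natCast] using h6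
      have hcases : c.re = 0 ∨ c.im = 0 := by
        by_contra hcon
        push_neg at hcon
        obtain ⟨h1, h2⟩ := hcon
        have e1 : 1 ≤ c.re ^ 2 := by
          rcases lt_or_gt_of_ne h1 with h | h <;> nlinarith
        have e2 : 1 ≤ c.im ^ 2 := by
          rcases lt_or_gt_of_ne h2 with h | h <;> nlinarith
        linarith
      rcases hcases with h | h
      · have h7 : c.im = 1 ∨ c.im = -1 := by
          have h8 : (c.im - 1) * (c.im + 1) = 0 := by
            rw [h] at hc1; linear_combination hc1
          rcases mul_eq_zero.mp h8 with h' | h'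
          · left; linarith
          · right; linarith
        have ha0 : a = 0 := by
          rcases h7 with h' | h' <;> rw [h, h'] at him0 <;> linarith
        omega
      · have h7 : c.re = 1 ∨ c.re = -1 := by
          have h8 : (c.re - 1) * (c.re + 1) = 0 := by
            rw [h] at hc1; linear_combination hc1
          rcases mul_eq_zero.mp h8 with h' | h'
          · left; linarith
          · right; linarith
        have hb0 : b = 0 := by
          rcases h7 with h' | h' <;> rw [h, h'] at him0 <;> linarith
        omega
  haveI : Fact p.Prime := ⟨hpprime⟩
  have hqp_eq : q = p := (Nat.prime_dvd_prime_iff_eq hq_prime hpprime).mp hqp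
  haveI hchar : CharP (GaussianInt ⧸ Ideal.span {π}) p := by rw [← hqp_eq]; exact hqP
  -- coprimality of a and b
  have hcop : Int.gcd a b = 1 := by
    have hga : ((Int.gcd a b : ℤ)) ∣ a := Int.gcd_dvd_left a b
    have hgb : ((Int.gcd a b : ℤ)) ∣ b := Int.gcd_dvd_right a b
    have hg2 : (Int.gcd a b) ^ 2 ∣ p := by
      have h4 : ((Int.gcd a b : ℤ)) ^ 2 ∣ (p:ℤ) := by
        rw [hpZ]
        exact dvd_add (pow_dvd_pow_of_dvd hga 2) (pow_dvd_pow_of_dvd hgb 2)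
      exact_mod_cast h4
    rcases (Nat.dvd_prime hpprime).mp hg2 with h | h
    · have h' : Int.gcd a b * Int.gcd a b = 1 := by rw [← sq]; exact h
      exact Nat.dvd_one.mp ⟨Int.gcd a b, h'.symm⟩
    · exfalso
      have h8 : Int.gcd a b ^ 2 % 8 = 5 := by rw [h]; exact hp8
      have hm := Nat.pow_mod (Int.gcd a b) 2 8
      have hlt : Int.gcd a b % 8 < 8 := Nat.mod_lt _ (by norm_num)
      set r := Int.gcd a b % 8 with hr
      interval_cases r <;> norm_num at hm <;> omega
  have hpiZ : Prime (p:ℤ) := Nat.prime_iff_prime_int.mp hpprime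
  have hbzm : ((b : ZMod p)) ≠ 0 := by
    rw [Ne, ZMod.intCast_zmod_eq_zero_iff_dvd]
    intro hdb
    have hdb2 : (p:ℤ) ∣ b ^ 2 := dvd_pow hdb two_ne_zero
    have hda2 : (p:ℤ) ∣ a ^ 2 := by
      have h5 : a ^ 2 = (p:ℤ) - b ^ 2 := by rw [hpZ]; ring
      rw [h5]; exact dvd_sub dvd_rfl hdb2
    have hda : (p:ℤ) ∣ a := hpiZ.dvd_of_dvd_pow hda2
    have h6 : (p:ℤ) ∣ (Int.gcd a b : ℤ) := Int.dvd_coe_gcd hda hdb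
    rw [hcop] at h6
    have := Int.le_of_dvd one_pos h6
    omega
  -- the isomorphism with ZMod p
  set φ := ZMod.castHom (dvd_refl p) (GaussianInt ⧸ Ideal.span {π}) with hφdef
  have hinj : Function.Injective φ := φ.injective
  have hπeq : π = ((a : ℤ) : GaussianInt) + ((b : ℤ) : GaussianInt) * gi := by
    ext <;> simp [gi, Zsqrtd.re_intCast, Zsqrtd.im_intCast, Zsqrtd.re_add, Zsqrtd.im_add,
      Zsqrtd.re_mul, Zsqrtd.im_mul, ha, hb]
  have hbu : (b : GaussianInt ⧸ Ideal.span {π}) * mk gi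
      = -(a : GaussianInt ⧸ Ideal.span {π}) := by
    have h0 : mk (((a : ℤ) : GaussianInt) + ((b : ℤ) : GaussianInt) * gi) = 0 := by
      rw [← hπeq]; exact hmkpi
    rw [map_add, map_mul, map_intCast, map_intCast] at h0
    linear_combination h0
  have hbφ : φ ((b : ZMod p)) = (b : GaussianInt ⧸ Ideal.span {π}) := map_intCast φ b
  have hbF : (b : GaussianInt ⧸ Ideal.span {π}) ≠ 0 := by
    rw [← hbφ]
    intro h
    exact hbzm (hinj (by rw [h, map_zero]))
  have hmkgi : mk gi = φ (-(a : ZMod p) * (b : ZMod p)⁻¹) := by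
    apply mul_left_cancel₀ hbF
    rw [hbu, ← hbφ, ← map_mul]
    have h7 : ((b:ZMod p)) * (-(a:ZMod p) * (b:ZMod p)⁻¹) = -(a:ZMod p) := by
      field_simp
    rw [h7, map_neg, map_intCast]
  have hsurj : Function.Surjective φ := by
    intro z
    obtain ⟨x, rfl⟩ := Ideal.Quotient.mk_surjective z
    refine ⟨(x.re : ZMod p) + (x.im : ZMod p) * (-(a : ZMod p) * (b : ZMod p)⁻¹), ?_⟩
    have hx : x = ((x.re : ℤ) : GaussianInt) + ((x.im : ℤ) : GaussianInt) * gi := by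
      ext <;> simp [gi, Zsqrtd.re_intCast, Zsqrtd.im_intCast, Zsqrtd.re_add, Zsqrtd.im_add,
        Zsqrtd.re_mul, Zsqrtd.im_mul]
    conv_rhs => rw [hx]
    simp only [map_add, map_mul, map_intCast, map_inv₀, map_neg]
    rw [hmkgi]
    simp only [map_mul, map_neg, map_intCast, map_inv₀]
  set e := RingEquiv.ofBijective φ ⟨hinj, hsurj⟩ with hedef
  set u : ZMod p := e.symm (mk gi) with hudef
  have heu : φ u = mk gi := e.apply_symm_apply (mk gi)
  have hbu' : (b : ZMod p) * u = -(a : ZMod p) := by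
    apply hinj
    simp only [map_mul, map_neg, map_intCast]
    rw [heu]
    exact hbu
  -- Jacobi symbol computations
  have habs : ∀ x : ℤ, jacobiSym x p = jacobiSym (x.natAbs : ℤ) p := by
    intro x
    rcases Int.natAbs_eq x with h | h
    · rw [← h]
    · conv_lhs => rw [h]
      rw [jacobiSym.neg _ hoddp, ZMod.χ₄_nat_one_mod_four hp4, one_mul]
  have hodda : Odd a.natAbs := Int.natAbs_odd.mpr (Int.odd_iff.mpr (by omega))
  have hJA1 : jacobiSym (a.natAbs : ℤ) p = 1 := by
    have hdvd1 : ((a.natAbs : ℕ) : ℤ) ∣ ((p:ℤ) - b ^ 2) := by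
      have h9 : (p:ℤ) - b ^ 2 = a ^ 2 := by rw [hpZ]; ring
      rw [h9]
      exact dvd_pow (Int.natAbs_dvd.mpr dvd_rfl) two_ne_zero
    rw [jacobi_aux hp4 hodda hdvd1]
    apply jacobiSym.sq_one'
    rw [gcd_natAbs_right', Int.gcd_comm]
    exact hcop
  have hJa : jacobiSym (-a) p = 1 := by
    rw [habs, Int.natAbs_neg]; exact hJA1
  have hnab : Odd ((a+b).natAbs) := Int.natAbs_odd.mpr (Int.odd_iff.mpr (by omega))
  have hJab : jacobiSym (a + b) p = 1 := by
    rw [habs]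
    have hdvd2 : (((a+b).natAbs : ℕ) : ℤ) ∣ ((p:ℤ) - 2 * b ^ 2) := by
      have h9 : (p:ℤ) - 2 * b ^ 2 = (a + b) * (a - b) := by rw [hpZ]; ring
      rw [h9]
      exact Dvd.dvd.mul_right (Int.natAbs_dvd.mpr dvd_rfl) _
    rw [jacobi_aux hp4 hnab hdvd2]
    have hsplit : (2 : ℤ) * b ^ 2 = 2 * b ^ 2 := rfl
    rw [jacobiSym.mul_left]
    have h2j : jacobiSym 2 ((a+b).natAbs) = 1 := by
      rw [jacobiSym.at_two hnab, ZMod.χ₈_nat_eq_if_mod_eight]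
      have h81 : (a+b).natAbs % 8 = 1 ∨ (a+b).natAbs % 8 = 7 := by omega
      have h82 : ¬ ((a+b).natAbs % 2 = 0) := by omega
      rcases h81 with h | h <;> simp [h, h82]
    have hbj : jacobiSym (b ^ 2) ((a+b).natAbs) = 1 := by
      apply jacobiSym.sq_one'
      rw [gcd_natAbs_right']
      apply Int.isCoprime_iff_gcd_eq_one.mp
      have h0 : IsCoprime (b:ℤ) a := Int.isCoprime_iff_gcd_eq_one.mpr (by rw [Int.gcd_comm]; exact hcop)
      have h1 := h0.add_mul_left_right 1
      simpa using h1
    rw [h2j, hbj]; norm_num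
  have hJgoalA : jacobiSym (b * (b - a)) p = 1 := by
    have hmod : (b * (b - a)) % (p:ℤ) = ((-a) * (a + b)) % (p:ℤ) := by
      have hd : (p:ℤ) ∣ ((-a) * (a + b) - b * (b - a)) := ⟨-1, by rw [hpZ]; ring⟩
      exact Int.modEq_iff_dvd.mpr hd
    rw [jacobiSym.mod_left' hmod, jacobiSym.mul_left, hJa, hJab]; norm_num
  have hJgoalB : jacobiSym (-(a * b)) p = -1 := by
    have h9 : (-(a*b) : ℤ) = (-a) * b := by ring
    rw [h9, jacobiSym.mul_left, hJa, one_mul]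
    obtain ⟨c0, hc0⟩ : ∃ c0, b = 2 * c0 := ⟨b / 2, by omega⟩
    have hc0mod : c0 % 8 = 5 := by omega
    have hoddc : Odd (c0.natAbs) := Int.natAbs_odd.mpr (Int.odd_iff.mpr (by omega))
    have hJ2 : jacobiSym 2 p = -1 := by
      rw [jacobiSym.at_two hoddp, ZMod.χ₈_nat_eq_if_mod_eight]
      have hp2 : ¬ (p % 2 = 0) := by omega
      norm_num [hp8, hp2]
    have hJc : jacobiSym c0 p = 1 := by
      rw [habs]
      have hdvd3 : ((c0.natAbs : ℕ) : ℤ) ∣ ((p:ℤ) - a ^ 2) := by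
        have h10 : (p:ℤ) - a ^ 2 = c0 * (4 * c0) := by rw [hpZ, hc0]; ring
        rw [h10]
        exact Dvd.dvd.mul_right (Int.natAbs_dvd.mpr dvd_rfl) _
      rw [jacobi_aux hp4 hoddc hdvd3]
      apply jacobiSym.sq_one'
      rw [gcd_natAbs_right']
      apply Int.isCoprime_iff_gcd_eq_one.mp
      have h0 : IsCoprime a b := Int.isCoprime_iff_gcd_eq_one.mpr hcop
      rw [hc0] at h0
      exact h0.of_mul_right_right
    rw [hc0, jacobiSym.mul_left, hJ2, hJc]; norm_num
  -- conclusion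
  constructor
  · have hsq : IsSquare ((b * (b - a) : ℤ) : ZMod p) :=
      ZMod.isSquare_of_jacobiSym_eq_one hJgoalA
    have hkey : ((b * (b - a) : ℤ) : ZMod p) = (1 + u) * (b : ZMod p) ^ 2 := by
      push_cast
      linear_combination (-(b : ZMod p)) * hbu'
    rw [hkey] at hsq
    have h11 : ((b:ZMod p)) ^ 2 * ((b:ZMod p)⁻¹) ^ 2 = 1 := by
      rw [← mul_pow, mul_inv_cancel₀ hbzm, one_pow]
    have hsq2 : IsSquare (1 + u) := by
      have h12 : 1 + u = ((1 + u) * (b:ZMod p) ^ 2) * ((b:ZMod p)⁻¹) ^ 2 := by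
        rw [mul_assoc, h11, mul_one]
      rw [h12]
      exact hsq.mul ⟨(b:ZMod p)⁻¹, by ring⟩
    obtain ⟨r, hr⟩ := hsq2
    refine ⟨φ r, ?_⟩
    have h13 : mk (1 + gi) = φ (1 + u) := by
      rw [map_add mk, map_add φ, map_one, map_one, heu]
    rw [h13, hr, map_mul]
  · intro hsqi
    obtain ⟨r, hr⟩ := hsqi
    obtain ⟨s, hs⟩ := hsurj r
    have husq : IsSquare u := by
      refine ⟨s, hinj ?_⟩
      rw [heu, map_mul, hs]
      exact hr
    have husq2 : IsSquare ((-(a * b) : ℤ) : ZMod p) := by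
      have hkey2 : ((-(a * b) : ℤ) : ZMod p) = u * (b : ZMod p) ^ 2 := by
        push_cast
        linear_combination (-(b : ZMod p)) * hbu'
      rw [hkey2]
      exact husq.mul ⟨(b:ZMod p), by ring⟩
    exact ZMod.nonsquare_of_jacobiSym_eq_neg_one hJgoalB husq2
end
end

section
/- Let β ∈ ℤ[i] and k ∈ ℤ be such that each of the four Gaussian integers β + k(1+i), β + ki(1+i), β − k(1+i), β − ki(1+i) is a prime element of ℤ[i] congruent to −1−6i modulo 16. Then (β⁴ + 4k⁴)² is not a rational integer; that is, the imaginary part of the Gaussian integer (β⁴ + 4k⁴)² is nonzero. -/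
noncomputable section

lemma aux8 : ∀ p q t : ZMod 8,
    (-1+8*p)*(-6+8*q)*((-1+8*p)^2-(-6+8*q)^2)
      *((-1+8*p)^4-6*(-1+8*p)^2*(-6+8*q)^2+(-6+8*q)^4+4*(8*t)^4) = 6 := by decide

/-- under the usual hypotheses on `β` and `k`, the Gaussian integer
`(β⁴ + 4k⁴)²` is not a rational integer, i.e. its imaginary part is nonzero. -/
theorem stmt11 (β : GaussianInt) (k : ℤ)
    (h1 : GoodPrime (β + (k : GaussianInt) * (1 + gi)))
    (h2 : GoodPrime (β + (k : GaussianInt) * gi * (1 + gi)))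
    (h3 : GoodPrime (β - (k : GaussianInt) * (1 + gi)))
    (h4 : GoodPrime (β - (k : GaussianInt) * gi * (1 + gi))) :
    ((β ^ 4 + 4 * (k : GaussianInt) ^ 4) ^ 2).im ≠ 0 := by
  obtain ⟨-, a, ha⟩ := h1
  obtain ⟨-, b, hb⟩ := h3
  have h2ne : (2:GaussianInt) ≠ 0 := by decide
  have hβ : β = (-1 - 6*gi) + 8*(a+b) := by
    have : 2*β = 2*((-1 - 6*gi) + 8*(a+b)) := by linear_combination ha + hb
    exact mul_left_cancel₀ h2ne this
  have hk : (k:GaussianInt)*(1+gi) = 8*(a-b) := by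
    have : 2*((k:GaussianInt)*(1+gi)) = 2*(8*(a-b)) := by linear_combination ha - hb
    exact mul_left_cancel₀ h2ne this
  have hre : β.re = -1 + 8*(a+b).re := by
    have := congrArg Zsqrtd.re hβ
    simpa [gi, Zsqrtd.re_mul, Zsqrtd.im_mul] using this
  have him : β.im = -6 + 8*(a+b).im := by
    have := congrArg Zsqrtd.im hβ
    simpa [gi, Zsqrtd.re_mul, Zsqrtd.im_mul] using this
  have hkre : k = 8*(a-b).re := by
    have := congrArg Zsqrtd.re hk
    simpa [gi, Zsqrtd.re_mul, Zsqrtd.im_mul] using this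
  have key : ((β ^ 4 + 4 * (k : GaussianInt) ^ 4) ^ 2).im
      = 8 * (β.re*β.im*(β.re^2-β.im^2)*(β.re^4-6*β.re^2*β.im^2+β.im^4+4*k^4)) := by
    simp [pow_succ, Zsqrtd.re_mul, Zsqrtd.im_mul, Zsqrtd.re_add, Zsqrtd.im_add]
    ring
  rw [key]
  set A : ℤ := β.re*β.im*(β.re^2-β.im^2)*(β.re^4-6*β.re^2*β.im^2+β.im^4+4*k^4) with hA
  have hAmod : (A : ZMod 8) = 6 := by
    have := aux8 ((a+b).re : ZMod 8) ((a+b).im : ZMod 8) ((a-b).re : ZMod 8)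
    rw [hA, hre, him, hkre]
    push_cast
    convert this using 2 <;> push_cast <;> ring
  have : A ≠ 0 := by
    intro h
    rw [h] at hAmod
    simp at hAmod
    exact absurd hAmod (by decide)
  exact mul_ne_zero (by norm_num) this
end
end
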